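/- In any crisp Gödel-Kripke model, Dunn's axiom Cr holds: for every world v and formulas φ, ψ, e(v, □(φ ∨ ψ)) ≤ max(e(v, □φ), e(v, ◇ψ)). -/
import Mathlib


/-- Gödel implication on the real unit interval (as reals). -/
noncomputable def gimp (x y : ℝ) : ℝ := if x ≤ y then 1 else y

/-- Gödel negation. -/
noncomputable def gneg (x : ℝ) : ℝ := gimp x 0
/-- Bi-modal formulas. -/
inductive MFm : Type where
  | var : ℕ → MFm
  | bot : MFm
  | and : MFm → MFm → MFm
  | or : MFm → MFm → MFm
  | imp : MFm → MFm → MFm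
  | box : MFm → MFm
  | dia : MFm → MFm

/-- Evaluation in a crisp Gödel-Kripke model: `□` is the infimum over
successors (`1` if there are none), `◇` the supremum (`0` if none). -/
noncomputable def ceval {W : Type} (R : W → W → Prop) (v : W → ℕ → ℝ) :
    MFm → W → ℝ
  | .var n, u => v u n
  | .bot, _ => 0
  | .and φ ψ, u => min (ceval R v φ u) (ceval R v ψ u)
  | .or φ ψ, u => max (ceval R v φ u) (ceval R v ψ u)
  | .imp φ ψ, u => gimp (ceval R v φ u) (ceval R v ψ u)
  | .box φ, u => sInf ({x | ∃ w, R u w ∧ x = ceval R v φ w} ∪ {1})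
  | .dia φ, u => sSup ({x | ∃ w, R u w ∧ x = ceval R v φ w} ∪ {0})

/-- A crisp model is witnessed if every `□`-infimum and `◇`-supremum is
attained at a successor (or equals the trivial value `1`, resp. `0`,
corresponding to a witness with `R`-value `0` in the valued reading). -/
def CWitnessed {W : Type} (R : W → W → Prop) (v : W → ℕ → ℝ) : Prop :=
  ∀ (φ : MFm) (u : W),
    (ceval R v (.box φ) u = 1 ∨
      ∃ w, R u w ∧ ceval R v φ w = ceval R v (.box φ) u) ∧
    (ceval R v (.dia φ) u = 0 ∨
      ∃ w, R u w ∧ ceval R v φ w = ceval R v (.dia φ) u)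

lemma ceval_mem_Icc {W : Type} (R : W → W → Prop) (v : W → ℕ → ℝ)
    (hv : ∀ w n, v w n ∈ Set.Icc (0:ℝ) 1) :
    ∀ (φ : MFm) (u : W), ceval R v φ u ∈ Set.Icc (0:ℝ) 1 := by
  intro φ
  induction φ with
  | var n => exact fun u => hv u n
  | bot => exact fun u => by simp [ceval]
  | and φ ψ ihφ ihψ =>
    intro u
    obtain ⟨h1, h2⟩ := ihφ u; obtain ⟨h3, h4⟩ := ihψ u
    exact ⟨le_min h1 h3, min_le_of_left_le h2⟩
  | or φ ψ ihφ ihψ =>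
    intro u
    obtain ⟨h1, h2⟩ := ihφ u; obtain ⟨h3, h4⟩ := ihψ u
    exact ⟨le_max_of_le_left h1, max_le h2 h4⟩
  | imp φ ψ ihφ ihψ =>
    intro u
    obtain ⟨h3, h4⟩ := ihψ u
    simp only [ceval, gimp]
    split
    · exact ⟨zero_le_one, le_refl 1⟩
    · exact ⟨h3, h4⟩
  | box φ ih =>
    intro u
    have hbdd : BddBelow ({x | ∃ w, R u w ∧ x = ceval R v φ w} ∪ {1}) := by
      refine ⟨0, ?_⟩
      rintro x (⟨w, _, rfl⟩ | rfl)
      · exact (ih w).1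
      · exact zero_le_one
    have hne : ({x | ∃ w, R u w ∧ x = ceval R v φ w} ∪ {1} : Set ℝ).Nonempty :=
      ⟨1, Or.inr rfl⟩
    simp only [ceval]
    constructor
    · apply le_csInf hne
      rintro x (⟨w, _, rfl⟩ | rfl)
      · exact (ih w).1
      · exact zero_le_one
    · exact csInf_le hbdd (Or.inr rfl)
  | dia φ ih =>
    intro u
    have hbdd : BddAbove ({x | ∃ w, R u w ∧ x = ceval R v φ w} ∪ {0}) := by
      refine ⟨1, ?_⟩
      rintro x (⟨w, _, rfl⟩ | rfl)
      · exact (ih w).2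
      · exact zero_le_one
    have hne : ({x | ∃ w, R u w ∧ x = ceval R v φ w} ∪ {0} : Set ℝ).Nonempty :=
      ⟨0, Or.inr rfl⟩
    simp only [ceval]
    constructor
    · exact le_csSup hbdd (Or.inr rfl)
    · apply csSup_le hne
      rintro x (⟨w, _, rfl⟩ | rfl)
      · exact (ih w).2
      · exact zero_le_one

/-- Dunn's axiom `Cr`: in any crisp Gödel-Kripke model,
`e(v, □(φ ∨ ψ)) ≤ max(e(v, □φ), e(v, ◇ψ))`. -/
theorem dunn_axiom_holds_crisp
    {W : Type} (R : W → W → Prop) (v : W → ℕ → ℝ)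
    (hv : ∀ w n, v w n ∈ Set.Icc (0:ℝ) 1)
    (u : W) (φ ψ : MFm) :
    ceval R v (.box (.or φ ψ)) u ≤
      max (ceval R v (.box φ) u) (ceval R v (.dia ψ) u) := by
  simp only [ceval] at *
  by_contra h
  push_neg at h
  obtain ⟨hb, hd⟩ := max_lt_iff.mp h
  set a := ceval R v (.box (.or φ ψ)) u with ha
  -- a ≤ 1
  have ha1 : a ≤ 1 := (ceval_mem_Icc R v hv _ u).2
  -- box φ < a gives a witness
  have hne : ({x | ∃ w, R u w ∧ x = ceval R v φ w} ∪ {1}).Nonempty := ⟨1, Or.inr rfl⟩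
  have := exists_lt_of_csInf_lt hne (show sInf _ < a from hb)
  obtain ⟨x, hx, hxa⟩ := this
  rcases hx with ⟨w, hRw, rfl⟩ | rfl
  · -- a ≤ ceval (or φ ψ) w = max ...
    have hbdd : BddBelow ({x | ∃ w, R u w ∧ x = ceval R v (MFm.or φ ψ) w} ∪ {1}) := by
      refine ⟨0, ?_⟩
      rintro x (⟨w', _, rfl⟩ | rfl)
      · exact (ceval_mem_Icc R v hv _ w').1
      · exact zero_le_one
    have hale : a ≤ ceval R v (.or φ ψ) w :=
      csInf_le hbdd (Or.inl ⟨w, hRw, rfl⟩)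
    have : a ≤ max (ceval R v φ w) (ceval R v ψ w) := hale
    have haψ : a ≤ ceval R v ψ w := by
      rcases max_cases (ceval R v φ w) (ceval R v ψ w) with ⟨he, _⟩ | ⟨he, _⟩
      · rw [he] at this; exact absurd (lt_of_le_of_lt this hxa) (lt_irrefl a)
      · rwa [he] at this
    have hbddA : BddAbove ({x | ∃ w, R u w ∧ x = ceval R v ψ w} ∪ {0}) := by
      refine ⟨1, ?_⟩
      rintro x (⟨w', _, rfl⟩ | rfl)
      · exact (ceval_mem_Icc R v hv _ w').2
      · exact zero_le_one
    have : ceval R v ψ w ≤ ceval R v (.dia ψ) u :=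
      le_csSup hbddA (Or.inl ⟨w, hRw, rfl⟩)
    exact absurd (lt_of_le_of_lt (haψ.trans this) hd) (lt_irrefl a)
  · exact absurd (lt_of_le_of_lt ha1 hxa) (lt_irrefl a)
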